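/- Let B be a Banach SSD space, A ⊆ B a maximally q-positive set, and E ∈ 𝓔_c(A). Then Λ_E := λ_E + q is convex, lower semicontinuous, Λ_E ≥ q on B, and A ⊆ {b : Λ_E(b) = q(b)}. -/

import Mathlib

noncomputable def lamE {B : Type*} (E : ℝ → Set B) (b : B) : EReal :=
  sInf ((fun ε : ℝ => (ε : EReal)) '' {ε : ℝ | 0 ≤ ε ∧ b ∈ E ε})

def QPositive {B : Type*} [AddCommGroup B] (q : B → ℝ) (A : Set B) : Prop :=
  A.Nonempty ∧ ∀ b ∈ A, ∀ c ∈ A, 0 ≤ q (b - c)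

def MaxQPositive {B : Type*} [AddCommGroup B] (q : B → ℝ) (A : Set B) : Prop :=
  QPositive q A ∧ ∀ A' : Set B, QPositive q A' → A ⊆ A' → A' = A

def TransportationFormula {B : Type*} [AddCommGroup B] [Module ℝ B]
    (q : B → ℝ) (E : ℝ → Set B) : Prop :=
  ∀ ε₁ ε₂ : ℝ, 0 ≤ ε₁ → 0 ≤ ε₂ → ∀ b₁ ∈ E ε₁, ∀ b₂ ∈ E ε₂,
    ∀ α₁ α₂ : ℝ, 0 ≤ α₁ → 0 ≤ α₂ → α₁ + α₂ = 1 →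
      0 ≤ α₁ * ε₁ + α₂ * ε₂ + α₁ * α₂ * q (b₁ - b₂) ∧
        α₁ • b₁ + α₂ • b₂ ∈ E (α₁ * ε₁ + α₂ * ε₂ + α₁ * α₂ * q (b₁ - b₂))

/-- Membership in the family `𝓔_c(A)` of closed enlargements. -/
def MemEnlFamilyClosed {B : Type*} [AddCommGroup B] [Module ℝ B] [TopologicalSpace B]
    (q : B → ℝ) (A : Set B) (E : ℝ → Set B) : Prop :=
  (∀ ε : ℝ, 0 ≤ ε → A ⊆ E ε) ∧
    (∀ ε₁ ε₂ : ℝ, 0 ≤ ε₁ → ε₁ ≤ ε₂ → E ε₁ ⊆ E ε₂) ∧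
      TransportationFormula q E ∧
        IsClosed {p : ℝ × B | 0 ≤ p.1 ∧ p.2 ∈ E p.1}

/-- Convexity for extended-real-valued functions. -/
def ConvexE {B : Type*} [AddCommGroup B] [Module ℝ B] (f : B → EReal) : Prop :=
  ∀ x y : B, ∀ a b : ℝ, 0 ≤ a → 0 ≤ b → a + b = 1 →
    f (a • x + b • y) ≤ (a : EReal) * f x + (b : EReal) * f y

/-! Since `E` is nondecreasing with closed graph, the infimum defining `λ_E b` is attained, so
`λ_E b + q b ≤ r` iff `b ∈ E (r - q b)`. Each sublevel set of `Λ_E` is therefore the preimage of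
the closed graph under the continuous map `b ↦ (r - q b, b)`. For convexity, the transportation
formula sends `x ∈ E (s - q x)` and `y ∈ E (t - q y)` to `a x + b y ∈ E (a s + b t - q (a x + b y))`,
by the identity `q (a x + b y) + a b q (x - y) = a q x + b q y` of the quadratic form `q`. -/

open Set

lemma ConvexE.of_forall_coe_le {B : Type*} [AddCommGroup B] [Module ℝ B] {f : B → EReal}
    (hbot : ∀ x, f x ≠ ⊥)
    (h : ∀ x y : B, ∀ a b s t : ℝ, 0 ≤ a → 0 ≤ b → a + b = 1 → f x ≤ s → f y ≤ t →
      f (a • x + b • y) ≤ ↑(a * s + b * t)) :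
    ConvexE f := by
  have top_case : ∀ x y : B, ∀ a b : ℝ, 0 ≤ a → 0 ≤ b → a + b = 1 → f x = ⊤ →
      f (a • x + b • y) ≤ a * f x + b * f y := by
    intro x y a b ha hb hab hx
    rcases ha.eq_or_lt with rfl | ha
    · obtain rfl : b = 1 := by linarith
      simp
    · have hy : (b : EReal) * f y ≠ ⊥ := (EReal.mul_ne_bot _ _).2
        ⟨.inl (EReal.coe_ne_bot _), .inr (hbot y), .inl (EReal.coe_ne_top _),
          .inl (EReal.coe_nonneg.2 hb)⟩
      rw [hx, EReal.coe_mul_top_of_pos ha, EReal.top_add_of_ne_bot hy]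
      exact le_top
  intro x y a b ha hb hab
  by_cases hx : f x = ⊤
  · exact top_case x y a b ha hb hab hx
  by_cases hy : f y = ⊤
  · rw [add_comm (a • x), add_comm ((a : EReal) * _)]
    exact top_case y x b a hb ha (by linarith) hy
  lift f x to ℝ using ⟨hx, hbot x⟩ with s hs
  lift f y to ℝ using ⟨hy, hbot y⟩ with t ht
  exact_mod_cast h x y a b s t ha hb hab hs.ge ht.ge

lemma lowerSemicontinuous_of_isClosed_setOf_le_coe {X : Type*} [TopologicalSpace X]
    {f : X → EReal} (h : ∀ r : ℝ, IsClosed {x | f x ≤ r}) : LowerSemicontinuous f := by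
  intro x z hz
  obtain ⟨r, hzr, hrx⟩ := EReal.lt_iff_exists_real_btwn.1 hz
  filter_upwards [(h r).isOpen_compl.mem_nhds (not_le.2 hrx)] with y hy
  exact hzr.trans (not_le.1 hy)

lemma apply_convex_combination_add_mul_apply_sub {B : Type*} [AddCommGroup B] [Module ℝ B]
    (brk : B →ₗ[ℝ] B →ₗ[ℝ] ℝ) {q : B → ℝ} (hq : ∀ b, q b = brk b b / 2)
    (x y : B) {a b : ℝ} (hab : a + b = 1) :
    q (a • x + b • y) + a * b * q (x - y) = a * q x + b * q y := by
  simp only [hq, map_sub, map_add, map_smul, LinearMap.sub_apply, LinearMap.add_apply,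
    LinearMap.smul_apply, smul_eq_mul]
  linear_combination (a * brk x x + b * brk y y) / 2 * hab

section Enlargement

variable {B : Type*}

lemma lamE_nonneg (E : ℝ → Set B) (b : B) : 0 ≤ lamE E b :=
  le_sInf <| by
    rintro _ ⟨ε, ⟨hε, -⟩, rfl⟩
    exact EReal.coe_nonneg.2 hε

lemma lamE_le_of_mem {E : ℝ → Set B} {b : B} {ε : ℝ} (hε : 0 ≤ ε) (hb : b ∈ E ε) :
    lamE E b ≤ ε :=
  sInf_le ⟨ε, ⟨hε, hb⟩, rfl⟩

lemma lamE_eq_zero_of_mem {E : ℝ → Set B} {b : B} (hb : b ∈ E 0) : lamE E b = 0 :=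
  le_antisymm (lamE_le_of_mem le_rfl hb) (lamE_nonneg E b)

lemma coe_le_lamE_add (E : ℝ → Set B) (q : B → ℝ) (b : B) : (q b : EReal) ≤ lamE E b + q b :=
  le_add_of_nonneg_left (lamE_nonneg E b)

variable [TopologicalSpace B] {E : ℝ → Set B}

lemma lamE_le_coe_iff (hmono : ∀ ε₁ ε₂ : ℝ, 0 ≤ ε₁ → ε₁ ≤ ε₂ → E ε₁ ⊆ E ε₂)
    (hcl : IsClosed {p : ℝ × B | 0 ≤ p.1 ∧ p.2 ∈ E p.1}) {b : B} {r : ℝ} :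
    lamE E b ≤ r ↔ 0 ≤ r ∧ b ∈ E r := by
  refine ⟨fun hle => ?_, fun h => lamE_le_of_mem h.1 h.2⟩
  set T : Set ℝ := {ε | 0 ≤ ε ∧ b ∈ E ε}
  have hT : T.Nonempty := by
    by_contra h
    rw [not_nonempty_iff_eq_empty] at h
    simp [lamE, T, h] at hle
  have hbdd : BddBelow T := ⟨0, fun ε hε => hε.1⟩
  have hmin : sInf T ∈ T :=
    (hcl.preimage (continuous_id.prodMk continuous_const)).csInf_mem hT hbdd
  have hle' : sInf T ≤ r := by
    refine EReal.coe_le_coe_iff.1 ((le_sInf ?_).trans hle)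
    rintro _ ⟨ε, hε, rfl⟩
    exact EReal.coe_le_coe_iff.2 (csInf_le hbdd hε)
  exact ⟨hmin.1.trans hle', hmono _ _ hmin.1 hle' hmin.2⟩

lemma lamE_add_le_coe_iff (hmono : ∀ ε₁ ε₂ : ℝ, 0 ≤ ε₁ → ε₁ ≤ ε₂ → E ε₁ ⊆ E ε₂)
    (hcl : IsClosed {p : ℝ × B | 0 ≤ p.1 ∧ p.2 ∈ E p.1}) (q : B → ℝ) {b : B} {r : ℝ} :
    lamE E b + q b ≤ r ↔ 0 ≤ r - q b ∧ b ∈ E (r - q b) := by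
  rw [← EReal.le_sub_iff_add_le (.inl (EReal.coe_ne_bot _)) (.inl (EReal.coe_ne_top _)),
    ← EReal.coe_sub, lamE_le_coe_iff hmono hcl]

lemma lowerSemicontinuous_lamE_add (hmono : ∀ ε₁ ε₂ : ℝ, 0 ≤ ε₁ → ε₁ ≤ ε₂ → E ε₁ ⊆ E ε₂)
    (hcl : IsClosed {p : ℝ × B | 0 ≤ p.1 ∧ p.2 ∈ E p.1}) {q : B → ℝ} (hq : Continuous q) :
    LowerSemicontinuous fun b => lamE E b + q b := by
  refine lowerSemicontinuous_of_isClosed_setOf_le_coe fun r => ?_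
  have hsub : {b | lamE E b + q b ≤ r} =
      (fun b => (r - q b, b)) ⁻¹' {p : ℝ × B | 0 ≤ p.1 ∧ p.2 ∈ E p.1} := by
    ext b
    exact lamE_add_le_coe_iff hmono hcl q
  rw [hsub]
  exact hcl.preimage ((continuous_const.sub hq).prodMk continuous_id)

lemma convexE_lamE_add [AddCommGroup B] [Module ℝ B]
    (hmono : ∀ ε₁ ε₂ : ℝ, 0 ≤ ε₁ → ε₁ ≤ ε₂ → E ε₁ ⊆ E ε₂)
    (hcl : IsClosed {p : ℝ × B | 0 ≤ p.1 ∧ p.2 ∈ E p.1})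
    (brk : B →ₗ[ℝ] B →ₗ[ℝ] ℝ) {q : B → ℝ} (hq : ∀ b, q b = brk b b / 2)
    (htrans : TransportationFormula q E) :
    ConvexE fun b => lamE E b + q b := by
  refine ConvexE.of_forall_coe_le
    (fun x => ne_bot_of_le_ne_bot (EReal.coe_ne_bot _) (coe_le_lamE_add E q x))
    fun x y a b s t ha hb hab hxs hyt => ?_
  rw [lamE_add_le_coe_iff hmono hcl] at hxs hyt ⊢
  have hlevel : a * (s - q x) + b * (t - q y) + a * b * q (x - y) =
      a * s + b * t - q (a • x + b • y) := by
    linarith [apply_convex_combination_add_mul_apply_sub brk hq x y hab]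
  rw [← hlevel]
  exact htrans _ _ hxs.1 hyt.1 x hxs.2 y hyt.2 a b ha hb hab

end Enlargement

theorem LambdaE_representative_general
    (B : Type*) [NormedAddCommGroup B] [NormedSpace ℝ B]
    (brk : B →ₗ[ℝ] B →ₗ[ℝ] ℝ)
    (q : B → ℝ) (hq : ∀ b : B, q b = brk b b / 2)
    (ι : B →L[ℝ] (B →L[ℝ] ℝ)) (hι : ∀ b c : B, ι c b = brk b c)
    (A : Set B)
    (E : ℝ → Set B) (hE : MemEnlFamilyClosed q A E) :
    ConvexE (fun b => lamE E b + (q b : EReal)) ∧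
    LowerSemicontinuous (fun b => lamE E b + (q b : EReal)) ∧
    (∀ b : B, (q b : EReal) ≤ lamE E b + (q b : EReal)) ∧
    A ⊆ {b : B | lamE E b + (q b : EReal) = (q b : EReal)} := by
  obtain ⟨hA, hmono, htrans, hcl⟩ := hE
  have hq_cont : Continuous q := by
    have hq_eq : q = fun b => ι b b / 2 := funext fun b => by rw [hq, hι]
    rw [hq_eq]
    fun_prop
  refine ⟨convexE_lamE_add hmono hcl brk hq htrans, lowerSemicontinuous_lamE_add hmono hcl hq_cont,
    coe_le_lamE_add E q, fun b hb => ?_⟩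
  simp [lamE_eq_zero_of_mem (hA 0 le_rfl hb)]

theorem LambdaE_representative
    (B : Type*) [NormedAddCommGroup B] [NormedSpace ℝ B] [CompleteSpace B] [Nontrivial B]
    (brk : B →ₗ[ℝ] B →ₗ[ℝ] ℝ) (hsym : ∀ b c : B, brk b c = brk c b)
    (q : B → ℝ) (hq : ∀ b : B, q b = brk b b / 2)
    (hpos : ∀ b : B, 0 ≤ (1 / 2) * ‖b‖ ^ 2 + q b)
    (ι : B →L[ℝ] (B →L[ℝ] ℝ)) (hι : ∀ b c : B, ι c b = brk b c)
    (A : Set B) (hA : MaxQPositive q A)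
    (E : ℝ → Set B) (hE : MemEnlFamilyClosed q A E) :
    ConvexE (fun b => lamE E b + (q b : EReal)) ∧
    LowerSemicontinuous (fun b => lamE E b + (q b : EReal)) ∧
    (∀ b : B, (q b : EReal) ≤ lamE E b + (q b : EReal)) ∧
    A ⊆ {b : B | lamE E b + (q b : EReal) = (q b : EReal)} :=
  LambdaE_representative_general B brk q hq ι hι A E hE
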